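/- (Example, failure of accessibility.) Let L be the first-order language with a single constant (0-ary function symbol) f, let U be a set with at least three elements, and define the sequential abstract-state system A as follows: the states are all pairs X = (D, v) where D ⊆ U has exactly two elements and the interpretation f_X = v is an element of D; τ(D, v) = (D, w) where w is the other element of D. Then for every state X = (D, v), the update set is Δ(X) = {(f, w)} where w is the element of D other than v, and for every set T of closed L-terms, Δ(X) is not T-accessible: w ≠ V_X(t) for every closed L-term t (since every closed L-term has value v in X). -/

import Mathlib

/-- A first-order language with only function symbols:
`Func n` is the set of `n`-ary function symbols. -/
structure Lang where
  Func : ℕ → Type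

/-- Closed terms of the language `L`. -/
inductive CTerm (L : Lang) : Type
  | app : ∀ {n : ℕ}, L.Func n → (Fin n → CTerm L) → CTerm L

/-- `CTerm.Subterm s t` means `s` is a subterm of `t`. -/
inductive CTerm.Subterm {L : Lang} : CTerm L → CTerm L → Prop
  | refl (t : CTerm L) : CTerm.Subterm t t
  | app {n : ℕ} (f : L.Func n) (ts : Fin n → CTerm L) (i : Fin n) {s : CTerm L} :
      CTerm.Subterm s (ts i) → CTerm.Subterm s (CTerm.app f ts)

/-- A set of closed terms is closed under subterms. -/
def SubtermClosed {L : Lang} (T : Set (CTerm L)) : Prop :=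
  ∀ s t : CTerm L, CTerm.Subterm s t → t ∈ T → s ∈ T

/-- A state: an `L`-structure whose carrier is a subset of `U`.
Function symbols are interpreted as operations mapping carrier elements
to carrier elements. -/
structure State (L : Lang) (U : Type*) where
  carrier : Set U
  interp : ∀ {n : ℕ}, L.Func n → (Fin n → U) → U
  interp_mem : ∀ {n : ℕ} (f : L.Func n) (x : Fin n → U),
    (∀ i, x i ∈ carrier) → interp f x ∈ carrier

/-- The value `V_X(t)` of a closed term `t` in the state `X`. -/
def State.val {L : Lang} {U : Type*} (X : State L U) : CTerm L → U
  | .app f ts => X.interp f (fun i => X.val (ts i))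

/-- `ξ` is an isomorphism from state `X` onto state `Y`. -/
def IsIso {L : Lang} {U : Type*} (ξ : U → U) (X Y : State L U) : Prop :=
  Set.BijOn ξ X.carrier Y.carrier ∧
  ∀ {n : ℕ} (f : L.Func n) (x : Fin n → U), (∀ i, x i ∈ X.carrier) →
    ξ (X.interp f x) = Y.interp f (fun i => ξ (x i))

/-- A sequential abstract-state system `(S, τ)`. -/
structure ASM (L : Lang) (U : Type*) where
  S : Set (State L U)
  nonempty : S.Nonempty
  τ : State L U → State L U
  mapsTo : ∀ X ∈ S, τ X ∈ S
  carrier_τ : ∀ X ∈ S, (τ X).carrier = X.carrier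
  closedIso : ∀ X ∈ S, ∀ (Y : State L U) (ξ : U → U), IsIso ξ X Y → Y ∈ S
  isoτ : ∀ X ∈ S, ∀ Y ∈ S, ∀ ξ : U → U, IsIso ξ X Y → IsIso ξ (τ X) (τ Y)

/-- An update `(f, (x_1, …, x_j), x_0)`. -/
structure Update (L : Lang) (U : Type*) where
  arity : ℕ
  f : L.Func arity
  args : Fin arity → U
  val : U

/-- `u` is an update of the state `X` (in the system `A`): all its components are
in the carrier of `X` and the interpretation of `u.f` in `τ(X)` maps `u.args` to `u.val`. -/
def IsUpd {L : Lang} {U : Type*} (A : ASM L U) (X : State L U) (u : Update L U) : Prop :=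
  (∀ i, u.args i ∈ X.carrier) ∧ u.val ∈ X.carrier ∧ (A.τ X).interp u.f u.args = u.val

/-- `Δ A X` : the set of nontrivial updates of `X`. -/
def Δ {L : Lang} {U : Type*} (A : ASM L U) (X : State L U) : Set (Update L U) :=
  {u | IsUpd A X u ∧ X.interp u.f u.args ≠ u.val}

/-- States `X` and `Y` coincide over the set `T` of closed terms. -/
def Coincide {L : Lang} {U : Type*} (T : Set (CTerm L)) (X Y : State L U) : Prop :=
  ∀ t ∈ T, X.val t = Y.val t

/-- States `X` and `Y` are `T`-similar. -/
def SimilarT {L : Lang} {U : Type*} (T : Set (CTerm L)) (X Y : State L U) : Prop :=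
  ∀ s ∈ T, ∀ t ∈ T, (X.val s = X.val t ↔ Y.val s = Y.val t)

/-- `σ` is (an extension of) the similarity function from `V_X(T)` to `V_Y(T)`:
`σ(V_X(t)) = V_Y(t)` for all `t ∈ T`. -/
def SimFun {L : Lang} {U : Type*} (T : Set (CTerm L)) (X Y : State L U) (σ : U → U) : Prop :=
  ∀ t ∈ T, σ (X.val t) = Y.val t

/-- An element `x` of `X` is `T`-accessible. -/
def AccElem {L : Lang} {U : Type*} (T : Set (CTerm L)) (X : State L U) (x : U) : Prop :=
  ∃ t ∈ T, X.val t = x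

/-- An update is `T`-accessible if all its element components are `T`-accessible. -/
def AccUpd {L : Lang} {U : Type*} (T : Set (CTerm L)) (X : State L U) (u : Update L U) : Prop :=
  AccElem T X u.val ∧ ∀ i, AccElem T X (u.args i)

/-- A set of updates of `X` is `T`-accessible. -/
def AccSet {L : Lang} {U : Type*} (T : Set (CTerm L)) (X : State L U)
    (D : Set (Update L U)) : Prop :=
  ∀ u ∈ D, AccUpd T X u

/-- The action of a function `σ` on an update:
`σ(f, (x_1, …, x_j), x_0) = (f, (σx_1, …, σx_j), σx_0)`. -/
def Update.map {L : Lang} {U : Type*} (σ : U → U) (u : Update L U) : Update L U :=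
  ⟨u.arity, u.f, fun i => σ (u.args i), σ u.val⟩

/-- `T` is an original bounded-exploration witness for `A`. -/
def OrigWitness {L : Lang} {U : Type*} (A : ASM L U) (T : Set (CTerm L)) : Prop :=
  ∀ X ∈ A.S, ∀ Y ∈ A.S, Coincide T X Y → Δ A X = Δ A Y

/-- `T` is a new bounded-exploration witness for `A`. -/
def NewWitness {L : Lang} {U : Type*} (A : ASM L U) (T : Set (CTerm L)) : Prop :=
  SubtermClosed T ∧
  (∀ X ∈ A.S, AccSet T X (Δ A X)) ∧
  (∀ X ∈ A.S, ∀ Y ∈ A.S, SimilarT T X Y → ∀ σ : U → U, SimFun T X Y σ →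
    ∀ u : Update L U, IsUpd A X u → AccUpd T X u →
      (u ∈ Δ A X ↔ Update.map σ u ∈ Δ A Y))

/-- The language with a single nonlogical symbol: a constant (`0`-ary function symbol) `f`. -/
inductive OneC : ℕ → Type
  | f : OneC 0

/-- That language as a `Lang`. -/
def L1 : Lang := ⟨OneC⟩

namespace L1

variable {U : Type*}

theorem val_eq_interp_const (X : State L1 U) (t : CTerm L1) :
    X.val t = X.interp OneC.f ![] := by
  obtain ⟨g, ts⟩ := t
  cases g
  exact congrArg (X.interp OneC.f) (Subsingleton.elim _ _)

theorem update_eq_mk_val (u : Update L1 U) : u = ⟨0, OneC.f, ![], u.val⟩ := by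
  obtain ⟨n, g, args, v⟩ := u
  cases g
  rw [Subsingleton.elim args ![]]

theorem not_accElem_of_ne (T : Set (CTerm L1)) (X : State L1 U) {x : U}
    (hx : X.interp OneC.f ![] ≠ x) : ¬ AccElem T X x := by
  rintro ⟨t, -, rfl⟩
  exact hx (val_eq_interp_const X t).symm

/-- Every closed term of `L1` denotes `f_X`, while a nontrivial update moves `f` away from it. -/
theorem not_accUpd_of_mem_Δ (T : Set (CTerm L1)) {A : ASM L1 U} {X : State L1 U}
    {u : Update L1 U} (hu : u ∈ Δ A X) : ¬ AccUpd T X u := by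
  rw [update_eq_mk_val u] at hu ⊢
  exact fun hacc => not_accElem_of_ne T X hu.2 hacc.1

theorem Δ_eq_singleton {A : ASM L1 U} {X : State L1 U} {b : U} (hb : b ∈ X.carrier)
    (hτ : (A.τ X).interp OneC.f ![] = b) (hne : X.interp OneC.f ![] ≠ b) :
    Δ A X = {⟨0, OneC.f, ![], b⟩} := by
  ext u
  rw [update_eq_mk_val u]
  simp only [Δ, IsUpd, Set.mem_ofPred_eq, Set.mem_singleton_iff, hτ]
  constructor
  · rintro ⟨⟨-, -, rfl⟩, -⟩
    rfl
  · intro h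
    rw [congrArg Update.val h]
    exact ⟨⟨fun i => i.elim0, hb, rfl⟩, hne⟩

end L1

theorem example_accessibility_fails_general
    {U : Type*}
    (A : ASM L1 U)
    (hτ : ∀ X ∈ A.S, ∀ a b : U, a ≠ b → X.carrier = {a, b} →
      X.interp OneC.f ![] = a → (A.τ X).interp OneC.f ![] = b) :
    ∀ X ∈ A.S, ∀ a b : U, a ≠ b → X.carrier = {a, b} →
      X.interp OneC.f ![] = a →
      Δ A X = {(⟨0, OneC.f, ![], b⟩ : Update L1 U)} ∧
      (∀ t : CTerm L1, X.val t = a) ∧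
      (∀ t : CTerm L1, b ≠ X.val t) ∧
      ∀ T : Set (CTerm L1), ¬ AccSet T X (Δ A X) := by
  intro X hX a b hab hc hfa
  have hval (t : CTerm L1) : X.val t = a := (L1.val_eq_interp_const X t).trans hfa
  have hΔ : Δ A X = {⟨0, OneC.f, ![], b⟩} :=
    L1.Δ_eq_singleton (by simp [hc]) (hτ X hX a b hab hc hfa) (hfa ▸ hab)
  refine ⟨hΔ, hval, fun t hbt => hab (hbt ▸ hval t).symm, fun T hacc => ?_⟩
  have hmem : (⟨0, OneC.f, ![], b⟩ : Update L1 U) ∈ Δ A X := hΔ ▸ rfl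
  exact L1.not_accUpd_of_mem_Δ T hmem (hacc _ hmem)

/-- Example: failure of accessibility: in the system whose states are
the pairs `X = ({a, b}, v)` with `a ≠ b` in `U` and `v = f_X ∈ {a, b}`, and whose
one-step transformation flips the value of `f`, for every state `X` with carrier
`{a, b}` and `f_X = a` the update set is `Δ(X) = {(f, b)}`, every closed term has value
`a` in `X` (so `b ≠ V_X(t)` for every closed term `t`), and `Δ(X)` is not
`T`-accessible for any set `T` of closed terms. -/
theorem example_accessibility_fails
    {U : Type*} (hU : ∃ x y z : U, x ≠ y ∧ x ≠ z ∧ y ≠ z)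
    (A : ASM L1 U)
    (hS : A.S = {X : State L1 U | ∃ a b : U, a ≠ b ∧ X.carrier = {a, b}})
    (hτ : ∀ X ∈ A.S, ∀ a b : U, a ≠ b → X.carrier = {a, b} →
      X.interp OneC.f ![] = a → (A.τ X).interp OneC.f ![] = b) :
    ∀ X ∈ A.S, ∀ a b : U, a ≠ b → X.carrier = {a, b} →
      X.interp OneC.f ![] = a →
      Δ A X = {(⟨0, OneC.f, ![], b⟩ : Update L1 U)} ∧
      (∀ t : CTerm L1, X.val t = a) ∧
      (∀ t : CTerm L1, b ≠ X.val t) ∧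
      ∀ T : Set (CTerm L1), ¬ AccSet T X (Δ A X) :=
  example_accessibility_fails_general A hτ
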